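/- The finally and globally operators satisfy: V(Fφ, uv^ω[t,∞)) = 1 iff there exists t' with t ≤ t' < |u|+|v| or |u| ≤ t' < |u|+|v| such that V(φ, uv^ω[t',∞)) = 1; equivalently, on an ultimately periodic word, Fφ holds at position t iff φ holds at some position in the finite set {t, …, |u|+|v|-1} ∪ {|u|, …, |u|+|v|-1}. -/

import Mathlib

def suffixW {A : Type*} (w : ℕ → A) (k : ℕ) : ℕ → A := fun n => w (n + k)

def upWord {A : Type*} (u v : List A) (hv : v ≠ []) : ℕ → A := fun n =>
  if h : n < u.length then u.get ⟨n, h⟩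
  else v.get ⟨(n - u.length) % v.length, Nat.mod_lt _ (List.length_pos_iff.mpr hv)⟩

inductive LTL (P : Type*) where
  | tt : LTL P
  | atom : P → LTL P
  | neg : LTL P → LTL P
  | disj : LTL P → LTL P → LTL P
  | next : LTL P → LTL P
  | untl : LTL P → LTL P → LTL P

def sat {P : Type*} : LTL P → (ℕ → Set P) → Prop
  | .tt, _ => True
  | .atom p, w => p ∈ w 0
  | .neg φ, w => ¬ sat φ w
  | .disj φ ψ, w => sat φ w ∨ sat ψ w
  | .next φ, w => sat φ (suffixW w 1)
  | .untl φ ψ, w => ∃ i, sat ψ (suffixW w i) ∧ ∀ j < i, sat φ (suffixW w j)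

/-- Fφ := true U φ. -/
def finF {P : Type*} (φ : LTL P) : LTL P := .untl .tt φ

/-! A suffix of `u v^ω` starting at or after `|u|` only depends on its starting position
modulo `|v|`, so it already occurs in the first period `[|u|, |u| + |v|)`, and also
arbitrarily far out, in particular after any given `t`. -/

theorem sat_finF_iff {P : Type*} (φ : LTL P) (w : ℕ → Set P) :
    sat (finF φ) w ↔ ∃ i, sat φ (suffixW w i) := by
  simp [finF, sat]

theorem suffixW_suffixW {A : Type*} (w : ℕ → A) (t i : ℕ) :
    suffixW (suffixW w t) i = suffixW w (i + t) := by
  funext n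
  simp only [suffixW, Nat.add_assoc]

theorem exists_suffixW_suffixW_iff {A : Type*} (Q : (ℕ → A) → Prop) (w : ℕ → A) (t : ℕ) :
    (∃ i, Q (suffixW (suffixW w t) i)) ↔ ∃ m, t ≤ m ∧ Q (suffixW w m) := by
  simp only [suffixW_suffixW]
  constructor
  · rintro ⟨i, hi⟩
    exact ⟨i + t, Nat.le_add_left t i, hi⟩
  · rintro ⟨m, htm, hm⟩
    exact ⟨m - t, by rwa [Nat.sub_add_cancel htm]⟩

theorem upWord_add_length {A : Type*} (u v : List A) (hv : v ≠ []) {n : ℕ}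
    (hn : u.length ≤ n) : upWord u v hv (n + v.length) = upWord u v hv n := by
  have hmod : (n + v.length - u.length) % v.length = (n - u.length) % v.length := by
    rw [Nat.sub_add_comm hn, Nat.add_mod_right]
  simp only [upWord, dif_neg (Nat.not_lt.mpr hn), dif_neg (by omega : ¬n + v.length < u.length)]
  exact congrArg v.get (Fin.ext hmod)

section EventuallyPeriodic

variable {A : Type*} {w : ℕ → A} {a p : ℕ}

theorem apply_add_mul_of_eventually_periodic (hw : ∀ n, a ≤ n → w (n + p) = w n) {n : ℕ}
    (hn : a ≤ n) (k : ℕ) : w (n + k * p) = w n := by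
  induction k with
  | zero => simp
  | succ k ih =>
    rw [Nat.succ_mul, ← Nat.add_assoc, hw _ (by omega), ih]

theorem suffixW_add_mul_of_eventually_periodic (hw : ∀ n, a ≤ n → w (n + p) = w n) {m : ℕ}
    (hm : a ≤ m) (k : ℕ) : suffixW w (m + k * p) = suffixW w m := by
  funext n
  simp only [suffixW, ← Nat.add_assoc]
  exact apply_add_mul_of_eventually_periodic hw (by omega) k

theorem suffixW_eq_suffixW_mod_of_eventually_periodic (hw : ∀ n, a ≤ n → w (n + p) = w n)
    {m : ℕ} (hm : a ≤ m) : suffixW w m = suffixW w (a + (m - a) % p) := by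
  have hdecomp : m = a + (m - a) % p + (m - a) / p * p := by
    have := Nat.mod_add_div (m - a) p
    rw [Nat.mul_comm] at this
    omega
  conv_lhs => rw [hdecomp]
  exact suffixW_add_mul_of_eventually_periodic hw (Nat.le_add_right _ _) _

theorem exists_suffixW_iff_of_eventually_periodic (hp : 0 < p)
    (hw : ∀ n, a ≤ n → w (n + p) = w n) (Q : (ℕ → A) → Prop) (t : ℕ) :
    (∃ m, t ≤ m ∧ Q (suffixW w m)) ↔
      ∃ t', ((t ≤ t' ∧ t' < a + p) ∨ (a ≤ t' ∧ t' < a + p)) ∧ Q (suffixW w t') := by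
  constructor
  · rintro ⟨m, htm, hm⟩
    by_cases hlt : m < a + p
    · exact ⟨m, Or.inl ⟨htm, hlt⟩, hm⟩
    · have hmod := Nat.mod_lt (m - a) hp
      refine ⟨a + (m - a) % p, Or.inr ⟨Nat.le_add_right _ _, by omega⟩, ?_⟩
      rwa [← suffixW_eq_suffixW_mod_of_eventually_periodic hw (by omega)]
  · rintro ⟨t', (⟨htt', -⟩ | ⟨hat', -⟩), ht'⟩
    · exact ⟨t', htt', ht'⟩
    · refine ⟨t' + t * p, le_add_left (Nat.le_mul_of_pos_right t hp), ?_⟩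
      rwa [suffixW_add_mul_of_eventually_periodic hw hat']

end EventuallyPeriodic

theorem sat_finally_finitary_general {P : Type*} (u v : List (Set P)) (hv : v ≠ [])
    (φ : LTL P) (t : ℕ) :
    sat (finF φ) (suffixW (upWord u v hv) t) ↔
      ∃ t', ((t ≤ t' ∧ t' < u.length + v.length) ∨
             (u.length ≤ t' ∧ t' < u.length + v.length)) ∧
        sat φ (suffixW (upWord u v hv) t') := by
  rw [sat_finF_iff, exists_suffixW_suffixW_iff (sat φ)]
  exact exists_suffixW_iff_of_eventually_periodic (List.length_pos_iff.mpr hv)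
    (fun _ hn => upWord_add_length u v hv hn) (sat φ) t

theorem sat_finally_finitary {P : Type*} (u v : List (Set P)) (hv : v ≠ [])
    (φ : LTL P) (t : ℕ) (ht : t < u.length + v.length) :
    sat (finF φ) (suffixW (upWord u v hv) t) ↔
      ∃ t', ((t ≤ t' ∧ t' < u.length + v.length) ∨
             (u.length ≤ t' ∧ t' < u.length + v.length)) ∧
        sat φ (suffixW (upWord u v hv) t') :=
  sat_finally_finitary_general u v hv φ t
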